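/- arXiv:1510.07537 — 3 statements merged into one kernel-verified Lean document; each statement's English description precedes it below -/
import Mathlib

section
/- Suppose s₀, s₁, s₂ : (0,T) → ℝ are functions with s₀ differentiable and s₀(t) > 0, such that for every t ∈ (0,T) and every (x,v) ∈ ℝⁿ×ℝⁿ the matrix differential Harnack inequality ∇² log ρ(t,x,v) − ½∇²U(x,v) ≥ ½·[[−(s₁(t)/s₀(t)) I, (s₂(t)/s₀(t)) I],[(s₂(t)/s₀(t)) I, −(s₀'(t)/s₀(t)) I]] holds. Then the function f = log ρ − ½U satisfies, for every t ∈ (0,T) and every (x,v): ∂_t f − |∇_v f|² + ⟨v, ∇_x f⟩ − h ≥ −n·s₀'(t)/(2·s₀(t)). -/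
noncomputable section
open Real Set Matrix

/-- `ℝⁿ` with the Euclidean norm. -/
abbrev E (n : ℕ) := EuclideanSpace ℝ (Fin n)

/-- The standard basis of `ℝⁿ × ℝⁿ`, indexed by `Fin n ⊕ Fin n`: `Sum.inl i` is the `i`-th
`x`-direction and `Sum.inr i` is the `i`-th `v`-direction. -/
def stdBasis (n : ℕ) : Fin n ⊕ Fin n → E n × E n
  | Sum.inl i => (EuclideanSpace.single i 1, 0)
  | Sum.inr i => (0, EuclideanSpace.single i 1)

/-- Partial derivative of `φ : ℝⁿ × ℝⁿ → ℝ` in the `j`-th coordinate direction. -/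
def pd {n : ℕ} (φ : E n × E n → ℝ) (j : Fin n ⊕ Fin n) (p : E n × E n) : ℝ :=
  fderiv ℝ φ p (stdBasis n j)

/-- The full Hessian of `φ` in the variables `(x, v)`, as a `2n × 2n` matrix. -/
def Hess {n : ℕ} (φ : E n × E n → ℝ) (p : E n × E n) :
    Matrix (Fin n ⊕ Fin n) (Fin n ⊕ Fin n) ℝ :=
  Matrix.of fun i j => pd (pd φ j) i p

/-- The Laplacian in the `v`-variables: `Δ_v φ = Σᵢ ∂²φ/∂vᵢ²`. -/
def lapV {n : ℕ} (φ : E n × E n → ℝ) (p : E n × E n) : ℝ :=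
  ∑ i : Fin n, pd (pd φ (Sum.inr i)) (Sum.inr i) p

/-- The squared Euclidean norm of the full gradient `∇φ`. -/
def gradNormSq {n : ℕ} (φ : E n × E n → ℝ) (p : E n × E n) : ℝ :=
  ∑ j : Fin n ⊕ Fin n, (pd φ j p) ^ 2

/-- The function `h = -½⟨v, ∇ₓU⟩ + ½Δ_v U - ¼|∇_v U|²`. -/
def hfun {n : ℕ} (U : E n × E n → ℝ) (p : E n × E n) : ℝ :=
  -(1/2) * (∑ i : Fin n, p.2 i * pd U (Sum.inl i) p) + (1/2) * lapV U p
    - (1/4) * ∑ i : Fin n, (pd U (Sum.inr i) p) ^ 2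

/-- The block-diagonal matrix `[[a·I, 0], [0, b·I]]`. -/
def blockDiag (n : ℕ) (a b : ℝ) : Matrix (Fin n ⊕ Fin n) (Fin n ⊕ Fin n) ℝ :=
  Matrix.fromBlocks (a • 1) 0 0 (b • 1)

/-- The right-hand side `½·[[-(s₁/s₀)I, (s₂/s₀)I], [(s₂/s₀)I, -(s₀'/s₀)I]]` of the
matrix differential Harnack inequality. -/
def harnackMatrix (n : ℕ) (s₀ s₁ s₂ : ℝ → ℝ) (t : ℝ) :
    Matrix (Fin n ⊕ Fin n) (Fin n ⊕ Fin n) ℝ :=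
  (1/2 : ℝ) • Matrix.fromBlocks (-(s₁ t / s₀ t) • 1) ((s₂ t / s₀ t) • 1)
    ((s₂ t / s₀ t) • 1) (-(deriv s₀ t / s₀ t) • 1)

lemma contDiff_pd {n : ℕ} {φ : E n × E n → ℝ} (hφ : ContDiff ℝ (⊤ : ℕ∞) φ) (j : Fin n ⊕ Fin n) :
    ContDiff ℝ (⊤ : ℕ∞) (pd φ j) := by
  have h1 : ContDiff ℝ (⊤ : ℕ∞) (fderiv ℝ φ) := hφ.fderiv_right (by simp)
  exact (ContinuousLinearMap.apply ℝ ℝ (stdBasis n j)).contDiff.comp h1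

lemma sum_ident {n : ℕ} (r : ℝ) (a b c u w s v : Fin n → ℝ) :
    ((∑ i, c i) - (∑ i, u i * b i) - ∑ i, v i * a i) / r
      - (∑ i, (b i / r - u i / 2) ^ 2)
      + (∑ i, v i * (a i / r - w i / 2))
      - (-(1/2) * (∑ i, v i * w i) + (1/2) * (∑ i, s i) - (1/4) * ∑ i, (u i) ^ 2)
    = ∑ i, (c i / r - (b i / r) ^ 2 - (1/2) * s i) := by
  have key : ∀ F : Finset (Fin n),
      ((∑ i ∈ F, c i) - (∑ i ∈ F, u i * b i) - ∑ i ∈ F, v i * a i) / r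
      - (∑ i ∈ F, (b i / r - u i / 2) ^ 2)
      + (∑ i ∈ F, v i * (a i / r - w i / 2))
      - (-(1/2) * (∑ i ∈ F, v i * w i) + (1/2) * (∑ i ∈ F, s i) - (1/4) * ∑ i ∈ F, (u i) ^ 2)
    = ∑ i ∈ F, (c i / r - (b i / r) ^ 2 - (1/2) * s i) := by
    intro F
    induction F using Finset.induction with
    | empty => simp
    | insert _ _ hx ih =>
      simp only [Finset.sum_insert hx]
      linear_combination ih
  exact key Finset.univ

/-- **Scalar differential Harnack inequality from the matrix one** (inequality (2.7)):
if the matrix differential Harnack inequality holds with functions `s₀, s₁, s₂`, then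
`f = log ρ − ½U` satisfies `∂ₜf − |∇_v f|² + ⟨v, ∇ₓf⟩ − h ≥ −n s₀'/(2 s₀)`. -/
theorem scalar_harnack_of_matrix_harnack
    (n : ℕ) (hn : 1 ≤ n) (T : ℝ) (hT : 0 < T)
    (U : E n × E n → ℝ) (hU : ContDiff ℝ (⊤ : ℕ∞) U)
    (ρ : ℝ → E n × E n → ℝ)
    (hρ : ContDiffOn ℝ (⊤ : ℕ∞) (fun q : ℝ × (E n × E n) => ρ q.1 q.2) (Ioo 0 T ×ˢ univ))
    (hpos : ∀ t ∈ Ioo 0 T, ∀ p : E n × E n, 0 < ρ t p)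
    (hpde : ∀ t ∈ Ioo 0 T, ∀ p : E n × E n,
      deriv (fun τ => ρ τ p) t =
        lapV (ρ t) p - (∑ i : Fin n, pd U (Sum.inr i) p * pd (ρ t) (Sum.inr i) p)
          - ∑ i : Fin n, p.2 i * pd (ρ t) (Sum.inl i) p)
    (s₀ s₁ s₂ : ℝ → ℝ)
    (hs₀diff : ∀ t ∈ Ioo 0 T, DifferentiableAt ℝ s₀ t)
    (hs₀pos : ∀ t ∈ Ioo 0 T, 0 < s₀ t)
    (hmatrix : ∀ t ∈ Ioo 0 T, ∀ p : E n × E n,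
      (Hess (fun q => Real.log (ρ t q)) p - (1/2 : ℝ) • Hess U p
        - harnackMatrix n s₀ s₁ s₂ t).PosSemidef) :
    ∀ t ∈ Ioo 0 T, ∀ p : E n × E n,
      deriv (fun τ => Real.log (ρ τ p) - U p / 2) t
        - (∑ i : Fin n, (pd (fun q => Real.log (ρ t q) - U q / 2) (Sum.inr i) p) ^ 2)
        + (∑ i : Fin n, p.2 i * pd (fun q => Real.log (ρ t q) - U q / 2) (Sum.inl i) p)
        - hfun U p
      ≥ -(n : ℝ) * deriv s₀ t / (2 * s₀ t) := by
  intro t ht p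
  have hr : 0 < ρ t p := hpos t ht p
  have hr' : (ρ t p) ≠ 0 := ne_of_gt hr
  -- smoothness of ρ t in space
  have hρt : ContDiff ℝ (⊤ : ℕ∞) (ρ t) := by
    rw [← contDiffOn_univ]
    exact hρ.comp ((contDiff_const.prodMk contDiff_id).contDiffOn)
      (fun q _ => ⟨ht, mem_univ _⟩)
  have hdρt : Differentiable ℝ (ρ t) := hρt.differentiable (by simp)
  have hUd : Differentiable ℝ U := hU.differentiable (by simp)
  have hne : ∀ q, ρ t q ≠ 0 := fun q => ne_of_gt (hpos t ht q)
  -- first derivatives of log ρ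
  have hlog : ∀ (j : Fin n ⊕ Fin n) (q : E n × E n),
      pd (fun q' => Real.log (ρ t q')) j q = pd (ρ t) j q / ρ t q := by
    intro j q
    have h1 : HasFDerivAt (fun q' => Real.log (ρ t q'))
        ((ρ t q)⁻¹ • fderiv ℝ (ρ t) q) q := ((hdρt q).hasFDerivAt).log (hne q)
    show fderiv ℝ (fun q' => Real.log (ρ t q')) q (stdBasis n j) = _
    rw [h1.fderiv]
    simp [pd, div_eq_inv_mul]
  -- first derivatives of f = log ρ - U/2
  have hfd : ∀ j : Fin n ⊕ Fin n,
      pd (fun q => Real.log (ρ t q) - U q / 2) j p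
        = pd (ρ t) j p / ρ t p - pd U j p / 2 := by
    intro j
    have h1 : HasFDerivAt (fun q => Real.log (ρ t q))
        ((ρ t p)⁻¹ • fderiv ℝ (ρ t) p) p := ((hdρt p).hasFDerivAt).log (hne p)
    have h2 : HasFDerivAt (fun q => U q / 2) ((2 : ℝ)⁻¹ • fderiv ℝ U p) p := by
      exact (((hUd p).hasFDerivAt).const_smul ((2 : ℝ)⁻¹)).congr_of_eventuallyEq
        (Filter.Eventually.of_forall fun q => by simp [div_eq_inv_mul])
    have hsub := h1.sub h2
    show fderiv ℝ (fun q => Real.log (ρ t q) - U q / 2) p (stdBasis n j) = _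
    rw [show (fun q => Real.log (ρ t q) - U q / 2)
        = (fun q => Real.log (ρ t q)) - (fun q => U q / 2) from rfl, hsub.fderiv]
    simp [pd, div_eq_inv_mul]
  -- second derivatives (vv-diagonal) of log ρ
  have hHess : ∀ i : Fin n,
      pd (pd (fun q => Real.log (ρ t q)) (Sum.inr i)) (Sum.inr i) p
        = pd (pd (ρ t) (Sum.inr i)) (Sum.inr i) p / ρ t p
          - (pd (ρ t) (Sum.inr i) p / ρ t p) ^ 2 := by
    intro i
    have hfe : pd (fun q' => Real.log (ρ t q')) (Sum.inr i)
        = fun q => pd (ρ t) (Sum.inr i) q * (ρ t q)⁻¹ := by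
      funext q; rw [hlog, div_eq_mul_inv]
    have hB : ContDiff ℝ (⊤ : ℕ∞) (pd (ρ t) (Sum.inr i)) := contDiff_pd hρt _
    have hBd : HasFDerivAt (pd (ρ t) (Sum.inr i))
        (fderiv ℝ (pd (ρ t) (Sum.inr i)) p) p :=
      (hB.differentiable (by simp) p).hasFDerivAt
    have hH : HasFDerivAt (fun q => (ρ t q)⁻¹)
        ((-(ρ t p ^ 2)⁻¹) • fderiv ℝ (ρ t) p) p :=
      (hasDerivAt_inv hr').comp_hasFDerivAt p (hdρt p).hasFDerivAt
    have hprod := hBd.mul hH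
    rw [hfe]
    show fderiv ℝ (fun q => pd (ρ t) (Sum.inr i) q * (ρ t q)⁻¹) p
        (stdBasis n (Sum.inr i)) = _
    rw [show (fun q => pd (ρ t) (Sum.inr i) q * (ρ t q)⁻¹)
        = pd (ρ t) (Sum.inr i) * (fun q => (ρ t q)⁻¹) from rfl, hprod.fderiv]
    simp only [ContinuousLinearMap.add_apply, ContinuousLinearMap.smul_apply,
      smul_eq_mul, ContinuousLinearMap.neg_apply, pd]
    field_simp
    ring
  -- the time derivative
  have hD : deriv (fun τ => Real.log (ρ τ p) - U p / 2) t
      = deriv (fun τ => ρ τ p) t / ρ t p := by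
    have h0 : ContDiffAt ℝ (⊤ : ℕ∞) (fun q : ℝ × (E n × E n) => ρ q.1 q.2) (t, p) :=
      hρ.contDiffAt ((isOpen_Ioo.prod isOpen_univ).mem_nhds ⟨ht, mem_univ _⟩)
    have h1 : DifferentiableAt ℝ (fun τ => ρ τ p) t := by
      have := h0.comp t ((contDiffAt_id (x := t)).prodMk contDiffAt_const)
      exact this.differentiableAt (by simp)
    exact ((h1.hasDerivAt.log hr').sub_const (U p / 2)).deriv
  -- diagonal entries from PSD
  have hdiag : ∀ i : Fin n,
      0 ≤ (pd (pd (ρ t) (Sum.inr i)) (Sum.inr i) p / ρ t p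
            - (pd (ρ t) (Sum.inr i) p / ρ t p) ^ 2)
          - (1/2) * pd (pd U (Sum.inr i)) (Sum.inr i) p
          + deriv s₀ t / (2 * s₀ t) := by
    intro i
    have h := (hmatrix t ht p).diag_nonneg (i := Sum.inr i)
    have h2 : 0 ≤ (Hess (fun q => Real.log (ρ t q)) p - (1/2 : ℝ) • Hess U p
        - harnackMatrix n s₀ s₁ s₂ t) (Sum.inr i) (Sum.inr i) := by simpa using h
    have h3 : (Hess (fun q => Real.log (ρ t q)) p - (1/2 : ℝ) • Hess U p
        - harnackMatrix n s₀ s₁ s₂ t) (Sum.inr i) (Sum.inr i)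
        = pd (pd (fun q => Real.log (ρ t q)) (Sum.inr i)) (Sum.inr i) p
          - (1/2) * pd (pd U (Sum.inr i)) (Sum.inr i) p
          - (1/2) * (-(deriv s₀ t / s₀ t)) := by
      simp [Hess, harnackMatrix, Matrix.sub_apply, Matrix.smul_apply,
        Matrix.fromBlocks_apply₂₂, Matrix.one_apply_eq, smul_eq_mul]
    rw [h3, hHess i] at h2
    have : (1/2) * (-(deriv s₀ t / s₀ t)) = -(deriv s₀ t / (2 * s₀ t)) := by ring
    linarith [h2]
  have hsum : 0 ≤ ∑ i : Fin n,
      ((pd (pd (ρ t) (Sum.inr i)) (Sum.inr i) p / ρ t p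
          - (pd (ρ t) (Sum.inr i) p / ρ t p) ^ 2)
        - (1/2) * pd (pd U (Sum.inr i)) (Sum.inr i) p
        + deriv s₀ t / (2 * s₀ t)) :=
    Finset.sum_nonneg fun i _ => hdiag i
  rw [Finset.sum_add_distrib, Finset.sum_const, Finset.card_univ, Fintype.card_fin,
    nsmul_eq_mul] at hsum
  -- rewrite the goal
  rw [hD, hpde t ht p]
  simp only [hfd, hfun, lapV]
  rw [sum_ident (ρ t p) (fun i => pd (ρ t) (Sum.inl i) p) (fun i => pd (ρ t) (Sum.inr i) p)
    (fun i => pd (pd (ρ t) (Sum.inr i)) (Sum.inr i) p) (fun i => pd U (Sum.inr i) p)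
    (fun i => pd U (Sum.inl i) p) (fun i => pd (pd U (Sum.inr i)) (Sum.inr i) p)
    (fun i => p.2 i)]
  have : -(n : ℝ) * deriv s₀ t / (2 * s₀ t) = -((n : ℝ) * (deriv s₀ t / (2 * s₀ t))) := by
    ring
  rw [this, ge_iff_le, neg_le]
  -- combine
  have h4 : ∑ i : Fin n, (pd (pd (ρ t) (Sum.inr i)) (Sum.inr i) p / ρ t p
      - (pd (ρ t) (Sum.inr i) p / ρ t p) ^ 2 - (1/2) * pd (pd U (Sum.inr i)) (Sum.inr i) p)
      = ∑ i : Fin n, ((pd (pd (ρ t) (Sum.inr i)) (Sum.inr i) p / ρ t p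
          - (pd (ρ t) (Sum.inr i) p / ρ t p) ^ 2)
        - (1/2) * pd (pd U (Sum.inr i)) (Sum.inr i) p) := by rfl
  linarith [hsum]
end
end

section
/- Let A₁, A₂, C₁, C₂ be symmetric n×n real matrices, B₁, B₂ be n×n real matrices, and let S₁, S₂ : [0,T] → Sym(n,ℝ) be differentiable solutions of the matrix Riccati equations Sᵢ'(t) = Aᵢ + Bᵢ Sᵢ(t) + Sᵢ(t) Bᵢᵀ + Sᵢ(t) Cᵢ Sᵢ(t), i = 1, 2. If S₁(0) ≤ S₂(0) and the 2n×2n block matrices satisfy [[A₁, B₁],[B₁ᵀ, C₁]] ≤ [[A₂, B₂],[B₂ᵀ, C₂]], then S₁(t) ≤ S₂(t) for all t ∈ [0,T]. -/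
/-! With `U = S₂ - S₁` and `F(A, B, C; S) = A + BS + SBᵀ + SCS`,
`U' = (B₂ + S₂C₂) U + U (B₂ᵀ + C₂S₁) + (F(A₂, B₂, C₂; S₁) - F(A₁, B₁, C₁; S₁))`, and the quadratic
form of the last term at `v` is that of the block difference at `(v, S₁v)`, hence nonnegative.
So if `Uv = -δv` with `δ > 0`, then `vᵀU'v ≥ -Kδ|v|²`, where `K` bounds the first two coefficients
on `[0, T]`. For `ε > 0` the matrix `U + εe^{(K+1)t}I` is positive definite at `t = 0`; at the first
time it becomes singular, a kernel vector `v` makes `vᵀ(U + εe^{(K+1)t}I)v` reach the minimum `0`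
from the left with derivative `≥ εe^{(K+1)t}|v|² > 0`, which is impossible. Letting `ε → 0` gives
`U ≥ 0`. -/

noncomputable section
open Real Set Matrix Filter
open scoped Topology

lemma HasDerivWithinAt.nonpos_of_isMinOn_Icc {q : ℝ → ℝ} {a b d : ℝ} (hab : a < b)
    (hq : HasDerivWithinAt q d (Icc a b) b) (hmin : IsMinOn q (Icc a b) b) : d ≤ 0 := by
  have hdir : a - b ∈ posTangentConeAt (Icc a b) b :=
    sub_mem_posTangentConeAt_of_segment_subset (by rw [segment_symm, segment_eq_Icc hab.le])
  have := hmin.localize.hasFDerivWithinAt_nonneg hq hdir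
  rw [ContinuousLinearMap.toSpanSingleton_apply, smul_eq_mul] at this
  nlinarith

namespace Matrix

lemma continuousOn_of_hasDerivWithinAt_apply {n : Type*} {U U' : ℝ → Matrix n n ℝ} {s : Set ℝ}
    (hU : ∀ t ∈ s, ∀ i j, HasDerivWithinAt (fun τ => U τ i j) (U' t i j) s t) :
    ContinuousOn U s :=
  continuousOn_pi.2 fun i => continuousOn_pi.2 fun j => fun t ht =>
    (hU t ht i j).continuousWithinAt

variable {n : Type*} [Fintype n]

lemma IsSymm.dotProduct_mulVec_comm {R : Type*} [CommSemiring R] {A : Matrix n n R}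
    (hA : A.IsSymm) (v w : n → R) : v ⬝ᵥ (A *ᵥ w) = (A *ᵥ v) ⬝ᵥ w := by
  rw [dotProduct_mulVec, ← mulVec_transpose, hA.eq]

lemma dotProduct_smul_mulVec_smul {R : Type*} [CommSemiring R] (A : Matrix n n R) (c : R)
    (v : n → R) : (c • v) ⬝ᵥ (A *ᵥ (c • v)) = c ^ 2 * (v ⬝ᵥ (A *ᵥ v)) := by
  rw [mulVec_smul, dotProduct_smul, smul_dotProduct, smul_eq_mul, smul_eq_mul]
  ring

lemma abs_dotProduct_mulVec_le (A : Matrix n n ℝ) {c : ℝ} (hA : ∀ i j, |A i j| ≤ c)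
    (v : n → ℝ) : |v ⬝ᵥ (A *ᵥ v)| ≤ Fintype.card n * c * (v ⬝ᵥ v) := by
  have hterm : ∀ i j, |v i * (A i j * v j)| ≤ c / 2 * (v i * v i) + c / 2 * (v j * v j) := by
    intro i j
    have hc : 0 ≤ c := (abs_nonneg _).trans (hA i j)
    rw [abs_mul, abs_mul, mul_left_comm]
    nlinarith [mul_le_mul_of_nonneg_right (hA i j)
        (mul_nonneg (abs_nonneg (v i)) (abs_nonneg (v j))),
      mul_nonneg hc (sq_nonneg (|v i| - |v j|)), abs_mul_abs_self (v i), abs_mul_abs_self (v j)]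
  calc |v ⬝ᵥ (A *ᵥ v)| = |∑ i, ∑ j, v i * (A i j * v j)| := by
        simp only [dotProduct, mulVec, Finset.mul_sum]
    _ ≤ ∑ i, ∑ j, |v i * (A i j * v j)| :=
        (Finset.abs_sum_le_sum_abs _ _).trans
          (Finset.sum_le_sum fun i _ => Finset.abs_sum_le_sum_abs _ _)
    _ ≤ ∑ i, ∑ j, (c / 2 * (v i * v i) + c / 2 * (v j * v j)) :=
        Finset.sum_le_sum fun i _ => Finset.sum_le_sum fun j _ => hterm i j
    _ = Fintype.card n * c * (v ⬝ᵥ v) := by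
        simp only [Finset.sum_add_distrib, Finset.sum_const, Finset.card_univ, nsmul_eq_mul,
          ← Finset.mul_sum, dotProduct]
        ring

lemma exists_abs_dotProduct_mulVec_le {X : Type*} [TopologicalSpace X] {s : Set X}
    (hs : IsCompact s) {M : X → Matrix n n ℝ} (hM : ContinuousOn M s) :
    ∃ K, ∀ t ∈ s, ∀ v : n → ℝ, |v ⬝ᵥ (M t *ᵥ v)| ≤ K * (v ⬝ᵥ v) := by
  let := Matrix.normedAddCommGroup (m := n) (n := n) (α := ℝ)
  obtain ⟨C, hC⟩ := hs.exists_bound_of_continuousOn hM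
  exact ⟨Fintype.card n * C, fun t ht v => abs_dotProduct_mulVec_le _
    (fun i j => (norm_entry_le_entrywise_sup_norm (M t)).trans (hC t ht)) v⟩

lemma continuous_dotProduct_mulVec_self :
    Continuous fun p : Matrix n n ℝ × (n → ℝ) => p.2 ⬝ᵥ (p.1 *ᵥ p.2) :=
  continuous_snd.dotProduct (continuous_fst.matrix_mulVec continuous_snd)

lemma hasDerivWithinAt_dotProduct_mulVec {U : ℝ → Matrix n n ℝ} {U' : Matrix n n ℝ} {s : Set ℝ}
    {t : ℝ} (hU : ∀ i j, HasDerivWithinAt (fun τ => U τ i j) (U' i j) s t) (v : n → ℝ) :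
    HasDerivWithinAt (fun τ => v ⬝ᵥ (U τ *ᵥ v)) (v ⬝ᵥ (U' *ᵥ v)) s t := by
  simp only [dotProduct, mulVec]
  exact HasDerivWithinAt.fun_sum fun i _ =>
    (HasDerivWithinAt.fun_sum fun j _ => (hU i j).mul_const (v j)).const_mul (v i)

lemma posDef_iff_forall_mem_sphere {A : Matrix n n ℝ} (hA : A.IsSymm) :
    A.PosDef ↔ ∀ v ∈ Metric.sphere (0 : n → ℝ) 1, 0 < v ⬝ᵥ (A *ᵥ v) := by
  refine ⟨fun h v hv => ?_, fun h =>
    .of_dotProduct_mulVec_pos (isHermitian_iff_isSymm.mpr hA) fun v hv => ?_⟩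
  · exact h.dotProduct_mulVec_pos (ne_zero_of_mem_unit_sphere ⟨v, hv⟩)
  · have hnorm : 0 < ‖v‖ := norm_pos_iff.mpr hv
    have := h (‖v‖⁻¹ • v) (by simp [norm_smul, hnorm.ne'])
    rw [dotProduct_smul_mulVec_smul] at this
    exact pos_of_mul_pos_right this (by positivity)

lemma PosSemidef.exists_mulVec_eq_zero_of_not_posDef {A : Matrix n n ℝ} (hA : A.PosSemidef)
    (hA' : ¬ A.PosDef) : ∃ v ≠ 0, A *ᵥ v = 0 := by
  obtain ⟨v, hv, hle⟩ : ∃ v ≠ 0, v ⬝ᵥ (A *ᵥ v) ≤ 0 := by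
    by_contra! h
    exact hA' (.of_dotProduct_mulVec_pos hA.isHermitian fun v hv => by simpa using h v hv)
  refine ⟨v, hv, (hA.dotProduct_mulVec_zero_iff v).mp ?_⟩
  exact le_antisymm (by simpa using hle) (hA.dotProduct_mulVec_nonneg v)

lemma isCompact_setOf_not_posDef {s : Set ℝ} (hs : IsCompact s) {P : ℝ → Matrix n n ℝ}
    (hP : ContinuousOn P s) (hsymm : ∀ t ∈ s, (P t).IsSymm) :
    IsCompact {t ∈ s | ¬ (P t).PosDef} := by
  have hZ : IsCompact {p ∈ s ×ˢ Metric.sphere (0 : n → ℝ) 1 | p.2 ⬝ᵥ (P p.1 *ᵥ p.2) ≤ 0} := by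
    refine (hs.prod (isCompact_sphere 0 1)).of_isClosed_subset ?_ fun p hp => hp.1
    refine ContinuousOn.preimage_isClosed_of_isClosed ?_
      (hs.isClosed.prod Metric.isClosed_sphere) (isClosed_Iic (a := (0 : ℝ)))
    exact continuous_dotProduct_mulVec_self.comp_continuousOn
      ((hP.comp continuousOn_fst fun p hp => hp.1).prodMk continuousOn_snd)
  convert hZ.image continuous_fst using 1
  ext t
  constructor
  · rintro ⟨ht, hbad⟩
    obtain ⟨v, hv, hle⟩ : ∃ v ∈ Metric.sphere (0 : n → ℝ) 1, v ⬝ᵥ (P t *ᵥ v) ≤ 0 := by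
      simpa [posDef_iff_forall_mem_sphere (hsymm t ht)] using hbad
    exact ⟨(t, v), ⟨⟨ht, hv⟩, hle⟩, rfl⟩
  · rintro ⟨⟨t, v⟩, ⟨⟨ht, hv⟩, hle⟩, rfl⟩
    refine ⟨ht, fun h => ?_⟩
    exact hle.not_gt ((posDef_iff_forall_mem_sphere (hsymm t ht)).mp h v hv)

lemma exists_first_not_posDef {T : ℝ} {P : ℝ → Matrix n n ℝ} (hP : ContinuousOn P (Icc 0 T))
    (hsymm : ∀ t ∈ Icc 0 T, (P t).IsSymm) (h0 : (P 0).PosDef)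
    (hbad : ∃ t ∈ Icc 0 T, ¬ (P t).PosDef) :
    ∃ t₀ ∈ Ioc 0 T, (∀ s ∈ Ico 0 t₀, (P s).PosDef) ∧ ∃ v ≠ 0, P t₀ *ᵥ v = 0 := by
  set bad := {t ∈ Icc 0 T | ¬ (P t).PosDef}
  have hcpt : IsCompact bad := isCompact_setOf_not_posDef isCompact_Icc hP hsymm
  obtain ⟨ht₀, hP₀⟩ : sInf bad ∈ bad := hcpt.sInf_mem hbad
  set t₀ := sInf bad
  have hbefore : ∀ s ∈ Ico 0 t₀, (P s).PosDef := fun s hs => by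
    by_contra h
    exact hs.2.not_ge (csInf_le hcpt.bddBelow ⟨⟨hs.1, hs.2.le.trans ht₀.2⟩, h⟩)
  have hpos : 0 < t₀ := ht₀.1.lt_of_ne fun h => hP₀ (h ▸ h0)
  have hpsd : (P t₀).PosSemidef := by
    refine .of_dotProduct_mulVec_nonneg (isHermitian_iff_isSymm.mpr (hsymm t₀ ht₀)) fun v => ?_
    have : (𝓝[Ico 0 t₀] t₀).NeBot := right_nhdsWithin_Ico_neBot hpos
    have hlim : Tendsto (fun s => star v ⬝ᵥ (P s *ᵥ v)) (𝓝[Ico 0 t₀] t₀)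
        (𝓝 (star v ⬝ᵥ (P t₀ *ᵥ v))) :=
      ((continuous_dotProduct_mulVec_self.comp (continuous_id.prodMk continuous_const)).tendsto
        _).comp ((hP t₀ ht₀).mono fun s hs => ⟨hs.1, hs.2.le.trans ht₀.2⟩)
    exact ge_of_tendsto hlim (eventually_nhdsWithin_of_forall fun s hs =>
      (hbefore s hs).posSemidef.dotProduct_mulVec_nonneg v)
  exact ⟨t₀, ⟨hpos, ht₀.2⟩, hbefore, hpsd.exists_mulVec_eq_zero_of_not_posDef hP₀⟩

section PosDef

variable [DecidableEq n]

lemma posSemidef_of_forall_posDef_add_smul_one {A : Matrix n n ℝ}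
    (hA : A.IsSymm) (h : ∀ c : ℝ, 0 < c → (A + c • 1).PosDef) : A.PosSemidef := by
  refine .of_dotProduct_mulVec_nonneg (isHermitian_iff_isSymm.mpr hA) fun v => ?_
  rw [star_trivial]
  have hpert : ∀ c ∈ Ioi (0 : ℝ), 0 ≤ v ⬝ᵥ (A *ᵥ v) + c * (v ⬝ᵥ v) := fun c hc => by
    simpa [add_mulVec, smul_mulVec] using (h c hc).posSemidef.dotProduct_mulVec_nonneg v
  have hlim : Tendsto (fun c : ℝ => v ⬝ᵥ (A *ᵥ v) + c * (v ⬝ᵥ v)) (𝓝[>] 0)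
      (𝓝 (v ⬝ᵥ (A *ᵥ v))) := by
    refine ((continuous_const.add (continuous_id.mul continuous_const)).tendsto' 0 _ ?_).mono_left
      nhdsWithin_le_nhds
    simp
  exact ge_of_tendsto hlim (eventually_nhdsWithin_of_forall hpert)

theorem posSemidef_of_hasDerivWithinAt_of_eigenvector {T K : ℝ} {U U' : ℝ → Matrix n n ℝ}
    (hsymm : ∀ t ∈ Icc 0 T, (U t).IsSymm)
    (hU : ∀ t ∈ Icc 0 T, ∀ i j, HasDerivWithinAt (fun τ => U τ i j) (U' t i j) (Icc 0 T) t)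
    (h0 : (U 0).PosSemidef)
    (hU' : ∀ t ∈ Icc 0 T, ∀ (δ : ℝ) (v : n → ℝ), 0 < δ → U t *ᵥ v = -δ • v →
      -(K * δ * (v ⬝ᵥ v)) ≤ v ⬝ᵥ (U' t *ᵥ v)) :
    ∀ t ∈ Icc 0 T, (U t).PosSemidef := by
  suffices hpert : ∀ ε > 0, ∀ t ∈ Icc 0 T, (U t + (ε * Real.exp ((K + 1) * t)) • 1).PosDef by
    intro t ht
    refine posSemidef_of_forall_posDef_add_smul_one (hsymm t ht) fun c hc => ?_
    have := hpert (c / Real.exp ((K + 1) * t)) (by positivity) t ht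
    rwa [div_mul_cancel₀ _ (Real.exp_pos _).ne'] at this
  intro ε hε
  set P : ℝ → Matrix n n ℝ := fun t => U t + (ε * Real.exp ((K + 1) * t)) • 1
  have hP : ∀ t ∈ Icc 0 T, ∀ i j, HasDerivWithinAt (fun τ => P τ i j)
      ((U' t + (ε * (Real.exp ((K + 1) * t) * (K + 1))) • 1) i j) (Icc 0 T) t := by
    intro t ht i j
    have hexp := ((hasDerivAt_id t).const_mul (K + 1)).exp.hasDerivWithinAt (s := Icc 0 T)
    simpa [P] using (hU t ht i j).fun_add ((hexp.const_mul ε).mul_const ((1 : Matrix n n ℝ) i j))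
  by_contra! hbad
  obtain ⟨t₀, ht₀, hbefore, v, hv, hPv⟩ := exists_first_not_posDef
    (continuousOn_of_hasDerivWithinAt_apply hP) (fun t ht => (hsymm t ht).add (isSymm_one.smul _))
    (PosDef.posSemidef_add h0 (PosDef.one.smul (by positivity))) hbad
  set δ := ε * Real.exp ((K + 1) * t₀)
  have hUv : U t₀ *ᵥ v = -δ • v := by
    rw [neg_smul, eq_neg_iff_add_eq_zero, ← hPv]
    simp [P, δ, add_mulVec, smul_mulVec]
  have hmin : IsMinOn (fun τ => v ⬝ᵥ (P τ *ᵥ v)) (Icc 0 t₀) t₀ := fun s hs => by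
    change v ⬝ᵥ (P t₀ *ᵥ v) ≤ v ⬝ᵥ (P s *ᵥ v)
    rw [hPv, dotProduct_zero]
    rcases hs.2.lt_or_eq with hlt | rfl
    · simpa using ((hbefore s ⟨hs.1, hlt⟩).dotProduct_mulVec_pos hv).le
    · simp [hPv]
  have hderiv := (hasDerivWithinAt_dotProduct_mulVec (fun i j =>
    (hP t₀ ⟨ht₀.1.le, ht₀.2⟩ i j).mono (Icc_subset_Icc_right ht₀.2)) v).nonpos_of_isMinOn_Icc
    ht₀.1 hmin
  have hvv : 0 < v ⬝ᵥ v := by simpa using dotProduct_star_self_pos_iff.mpr hv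
  have hδ : 0 < δ := by positivity
  have := hU' t₀ ⟨ht₀.1.le, ht₀.2⟩ δ v hδ hUv
  simp only [add_mulVec, smul_mulVec, one_mulVec, dotProduct_add, dotProduct_smul,
    smul_eq_mul] at hderiv
  nlinarith [mul_pos hδ hvv]

end PosDef

def riccati {R : Type*} [CommRing R] (A B C S : Matrix n n R) : Matrix n n R :=
  A + B * S + S * Bᵀ + S * C * S

lemma riccati_sub_riccati {R : Type*} [CommRing R] (A B C S₁ S₂ : Matrix n n R) :
    riccati A B C S₂ - riccati A B C S₁ = (B + S₂ * C) * (S₂ - S₁) + (S₂ - S₁) * (Bᵀ + C * S₁) := by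
  unfold riccati
  noncomm_ring

lemma sumElim_dotProduct_fromBlocks_mulVec {R : Type*} [CommRing R] (A B C : Matrix n n R)
    {S : Matrix n n R} (hS : S.IsSymm) (v : n → R) :
    Sum.elim v (S *ᵥ v) ⬝ᵥ (fromBlocks A B Bᵀ C *ᵥ Sum.elim v (S *ᵥ v)) =
      v ⬝ᵥ (riccati A B C S *ᵥ v) := by
  rw [fromBlocks_mulVec, sumElim_dotProduct_sumElim, Sum.elim_comp_inl, Sum.elim_comp_inr]
  simp only [riccati, add_mulVec, ← mulVec_mulVec, dotProduct_add, hS.dotProduct_mulVec_comm v]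
  ring

lemma dotProduct_riccati_sub_riccati_nonneg {A₁ A₂ B₁ B₂ C₁ C₂ S : Matrix n n ℝ}
    (hblock : (fromBlocks A₂ B₂ B₂ᵀ C₂ - fromBlocks A₁ B₁ B₁ᵀ C₁).PosSemidef) (hS : S.IsSymm)
    (v : n → ℝ) : 0 ≤ v ⬝ᵥ ((riccati A₂ B₂ C₂ S - riccati A₁ B₁ C₁ S) *ᵥ v) := by
  have := hblock.dotProduct_mulVec_nonneg (Sum.elim v (S *ᵥ v))
  rwa [star_trivial, sub_mulVec, dotProduct_sub, sumElim_dotProduct_fromBlocks_mulVec _ _ _ hS,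
    sumElim_dotProduct_fromBlocks_mulVec _ _ _ hS, ← dotProduct_sub, ← sub_mulVec] at this

lemma dotProduct_riccati_sub_riccati_ge_of_mulVec_eq {A₁ A₂ B₁ B₂ C₁ C₂ S₁ S₂ : Matrix n n ℝ}
    (hblock : (fromBlocks A₂ B₂ B₂ᵀ C₂ - fromBlocks A₁ B₁ B₁ᵀ C₁).PosSemidef)
    (hS₁ : S₁.IsSymm) (hS₂ : S₂.IsSymm) {δ : ℝ} {v : n → ℝ} (hv : (S₂ - S₁) *ᵥ v = -δ • v) :
    -δ * (v ⬝ᵥ ((B₂ + S₂ * C₂) *ᵥ v) + v ⬝ᵥ ((B₂ᵀ + C₂ * S₁) *ᵥ v)) ≤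
      v ⬝ᵥ ((riccati A₂ B₂ C₂ S₂ - riccati A₁ B₁ C₁ S₁) *ᵥ v) := by
  have hsplit : v ⬝ᵥ ((riccati A₂ B₂ C₂ S₂ - riccati A₁ B₁ C₁ S₁) *ᵥ v) =
      v ⬝ᵥ (((B₂ + S₂ * C₂) * (S₂ - S₁) + (S₂ - S₁) * (B₂ᵀ + C₂ * S₁)) *ᵥ v) +
        v ⬝ᵥ ((riccati A₂ B₂ C₂ S₁ - riccati A₁ B₁ C₁ S₁) *ᵥ v) := by
    rw [← riccati_sub_riccati, ← dotProduct_add, ← add_mulVec, sub_add_sub_cancel]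
  have hlin : v ⬝ᵥ (((B₂ + S₂ * C₂) * (S₂ - S₁) + (S₂ - S₁) * (B₂ᵀ + C₂ * S₁)) *ᵥ v) =
      -δ * (v ⬝ᵥ ((B₂ + S₂ * C₂) *ᵥ v) + v ⬝ᵥ ((B₂ᵀ + C₂ * S₁) *ᵥ v)) := by
    rw [add_mulVec, dotProduct_add, ← mulVec_mulVec, ← mulVec_mulVec,
      (hS₂.sub hS₁).dotProduct_mulVec_comm v, hv]
    simp only [mulVec_smul, dotProduct_smul, smul_dotProduct, smul_eq_mul]
    ring
  rw [hsplit, hlin]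
  linarith [dotProduct_riccati_sub_riccati_nonneg hblock hS₁ v]

end Matrix

theorem riccati_comparison_general (n : ℕ) (T : ℝ)
    (A₁ A₂ C₁ C₂ B₁ B₂ : Matrix (Fin n) (Fin n) ℝ)
    (S₁ S₂ : ℝ → Matrix (Fin n) (Fin n) ℝ)
    (hS₁symm : ∀ t ∈ Icc 0 T, (S₁ t).IsSymm)
    (hS₂symm : ∀ t ∈ Icc 0 T, (S₂ t).IsSymm)
    (hS₁ : ∀ t ∈ Icc 0 T, ∀ i j, HasDerivWithinAt (fun τ => S₁ τ i j)
      ((A₁ + B₁ * S₁ t + S₁ t * B₁ᵀ + S₁ t * C₁ * S₁ t) i j) (Icc 0 T) t)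
    (hS₂ : ∀ t ∈ Icc 0 T, ∀ i j, HasDerivWithinAt (fun τ => S₂ τ i j)
      ((A₂ + B₂ * S₂ t + S₂ t * B₂ᵀ + S₂ t * C₂ * S₂ t) i j) (Icc 0 T) t)
    (h0 : (S₂ 0 - S₁ 0).PosSemidef)
    (hblock : (Matrix.fromBlocks A₂ B₂ B₂ᵀ C₂ - Matrix.fromBlocks A₁ B₁ B₁ᵀ C₁).PosSemidef) :
    ∀ t ∈ Icc 0 T, (S₂ t - S₁ t).PosSemidef := by
  obtain ⟨K₁, hK₁⟩ := exists_abs_dotProduct_mulVec_le (M := fun t => B₂ + S₂ t * C₂) isCompact_Icc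
    ((continuous_const.add (continuous_id.matrix_mul continuous_const)).comp_continuousOn
      (continuousOn_of_hasDerivWithinAt_apply hS₂))
  obtain ⟨K₂, hK₂⟩ := exists_abs_dotProduct_mulVec_le (M := fun t => B₂ᵀ + C₂ * S₁ t) isCompact_Icc
    ((continuous_const.add (continuous_const.matrix_mul continuous_id)).comp_continuousOn
      (continuousOn_of_hasDerivWithinAt_apply hS₁))
  refine posSemidef_of_hasDerivWithinAt_of_eigenvector (K := K₁ + K₂)
    (U' := fun t => riccati A₂ B₂ C₂ (S₂ t) - riccati A₁ B₁ C₁ (S₁ t))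
    (fun t ht => (hS₂symm t ht).sub (hS₁symm t ht))
    (fun t ht i j => (hS₂ t ht i j).fun_sub (hS₁ t ht i j)) h0 ?_
  intro t ht δ v hδ hv
  have hge := dotProduct_riccati_sub_riccati_ge_of_mulVec_eq hblock (hS₁symm t ht) (hS₂symm t ht) hv
  have hM : v ⬝ᵥ ((B₂ + S₂ t * C₂) *ᵥ v) ≤ K₁ * (v ⬝ᵥ v) := (abs_le.mp (hK₁ t ht v)).2
  have hN : v ⬝ᵥ ((B₂ᵀ + C₂ * S₁ t) *ᵥ v) ≤ K₂ * (v ⬝ᵥ v) := (abs_le.mp (hK₂ t ht v)).2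
  nlinarith [mul_le_mul_of_nonneg_left (add_le_add hM hN) hδ.le]

/-- **Comparison theorem for matrix Riccati equations** (Theorem 3.2, after Royden):
if `Sᵢ' = Aᵢ + BᵢSᵢ + SᵢBᵢᵀ + SᵢCᵢSᵢ` for `i = 1, 2`, `S₁(0) ≤ S₂(0)`, and
`[[A₁, B₁], [B₁ᵀ, C₁]] ≤ [[A₂, B₂], [B₂ᵀ, C₂]]`, then `S₁(t) ≤ S₂(t)` for all `t ∈ [0, T]`. -/
theorem riccati_comparison (n : ℕ) (T : ℝ) (hT : 0 < T)
    (A₁ A₂ C₁ C₂ B₁ B₂ : Matrix (Fin n) (Fin n) ℝ)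
    (hA₁ : A₁.IsSymm) (hA₂ : A₂.IsSymm) (hC₁ : C₁.IsSymm) (hC₂ : C₂.IsSymm)
    (S₁ S₂ : ℝ → Matrix (Fin n) (Fin n) ℝ)
    (hS₁symm : ∀ t ∈ Icc 0 T, (S₁ t).IsSymm)
    (hS₂symm : ∀ t ∈ Icc 0 T, (S₂ t).IsSymm)
    (hS₁ : ∀ t ∈ Icc 0 T, ∀ i j, HasDerivWithinAt (fun τ => S₁ τ i j)
      ((A₁ + B₁ * S₁ t + S₁ t * B₁ᵀ + S₁ t * C₁ * S₁ t) i j) (Icc 0 T) t)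
    (hS₂ : ∀ t ∈ Icc 0 T, ∀ i j, HasDerivWithinAt (fun τ => S₂ τ i j)
      ((A₂ + B₂ * S₂ t + S₂ t * B₂ᵀ + S₂ t * C₂ * S₂ t) i j) (Icc 0 T) t)
    (h0 : (S₂ 0 - S₁ 0).PosSemidef)
    (hblock : (Matrix.fromBlocks A₂ B₂ B₂ᵀ C₂ - Matrix.fromBlocks A₁ B₁ B₁ᵀ C₁).PosSemidef) :
    ∀ t ∈ Icc 0 T, (S₂ t - S₁ t).PosSemidef :=
  riccati_comparison_general n T A₁ A₂ C₁ C₂ B₁ B₂ S₁ S₂ hS₁symm hS₂symm hS₁ hS₂ h0 hblock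
end
end

section
/- Let B₁, B₂, B₃ be n×n real matrices and let M : ℝ → M_{2n}(ℝ) be the fundamental solution (M(0) = I) of the linear matrix ODE M'(t) = [[B₁, B₂],[−B₃, −B₁ᵀ]]·M(t), written in n×n blocks as M(t) = [[M₁(t), M₂(t)],[M₃(t), M₄(t)]]. Fix an n×n matrix S₀ and let t range over an interval around 0 on which M₃(t)S₀ + M₄(t) is invertible. Then S(t) := (M₁(t)S₀ + M₂(t))·(M₃(t)S₀ + M₄(t))⁻¹ satisfies S(0) = S₀ and solves the matrix Riccati equation S'(t) = B₂ + B₁ S(t) + S(t) B₁ᵀ + S(t) B₃ S(t). -/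
/-!
The block column `[P; Q] = M·[S₀; 1]`, i.e. `P = M₁S₀ + M₂` and `Q = M₃S₀ + M₄`, solves the same
linear system as `M`: `P' = B₁P + B₂Q`, `Q' = -B₃P - B₁ᵀQ`. Wherever `Q` is invertible, the quotient
rule `(PQ⁻¹)' = P'Q⁻¹ - PQ⁻¹Q'Q⁻¹` turns this linear system into the Riccati equation for
`S = PQ⁻¹`; this computation is valid in any Banach algebra. At `t = 0`, `M(0) = I` gives
`P = S₀` and `Q = 1`.
-/

noncomputable section
open Real Set Matrix Filter

/-- The candidate Riccati solution `S(t) = (M₁(t)S₀ + M₂(t))(M₃(t)S₀ + M₄(t))⁻¹` built from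
the block decomposition of the fundamental solution `M` of a linear matrix ODE. -/
def riccatiSol {n : ℕ} (M : ℝ → Matrix (Fin n ⊕ Fin n) (Fin n ⊕ Fin n) ℝ)
    (S₀ : Matrix (Fin n) (Fin n) ℝ) (t : ℝ) : Matrix (Fin n) (Fin n) ℝ :=
  ((M t).toBlocks₁₁ * S₀ + (M t).toBlocks₁₂) * ((M t).toBlocks₂₁ * S₀ + (M t).toBlocks₂₂)⁻¹

section NormedAlgebra

variable {𝕜 : Type*} [NontriviallyNormedField 𝕜] {R : Type*} [NormedRing R] [NormedAlgebra 𝕜 R]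
  [HasSummableGeomSeries R] {t : 𝕜}

theorem HasDerivAt.ringInverse {f : 𝕜 → R} {f' : R} (hf : HasDerivAt f f' t)
    (hft : IsUnit (f t)) :
    HasDerivAt (fun τ => Ring.inverse (f τ))
      (-(Ring.inverse (f t) * f' * Ring.inverse (f t))) t := by
  obtain ⟨u, hu⟩ := hft
  have := (hasFDerivAt_ringInverse (𝕜 := 𝕜) u).comp_hasDerivAt_of_eq t hf hu
  simpa [← hu, Function.comp_def] using this

theorem hasDerivAt_mul_ringInverse_of_linear {P Q : 𝕜 → R} {A₁₁ A₁₂ A₂₁ A₂₂ : R}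
    (hP : HasDerivAt P (A₁₁ * P t + A₁₂ * Q t) t) (hQ : HasDerivAt Q (A₂₁ * P t + A₂₂ * Q t) t)
    (hQt : IsUnit (Q t)) :
    HasDerivAt (fun τ => P τ * Ring.inverse (Q τ))
      (A₁₂ + A₁₁ * (P t * Ring.inverse (Q t)) - P t * Ring.inverse (Q t) * A₂₂
        - P t * Ring.inverse (Q t) * A₂₁ * (P t * Ring.inverse (Q t))) t := by
  refine (hP.mul (hQ.ringInverse hQt)).congr_deriv ?_
  have hQQ : Q t * Ring.inverse (Q t) = 1 := Ring.mul_inverse_cancel _ hQt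
  calc _ = A₁₂ * (Q t * Ring.inverse (Q t)) + A₁₁ * (P t * Ring.inverse (Q t))
        - P t * Ring.inverse (Q t) * A₂₂ * (Q t * Ring.inverse (Q t))
        - P t * Ring.inverse (Q t) * A₂₁ * (P t * Ring.inverse (Q t)) := by noncomm_ring
    _ = _ := by rw [hQQ, mul_one, mul_one]

end NormedAlgebra

namespace Matrix

variable {m n : Type*}

theorem mul_fromBlocks_zero_one_zero [Fintype n] [DecidableEq n] {R : Type*} [Semiring R]
    (M : Matrix (n ⊕ n) (n ⊕ n) R) (X : Matrix n n R) :
    M * fromBlocks X 0 1 0 =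
      fromBlocks (M.toBlocks₁₁ * X + M.toBlocks₁₂) 0 (M.toBlocks₂₁ * X + M.toBlocks₂₂) 0 := by
  conv_lhs => rw [← fromBlocks_toBlocks M, fromBlocks_multiply]
  simp only [mul_zero, mul_one, add_zero]

theorem hasDerivAt_iff {𝕜 : Type*} [NontriviallyNormedField 𝕜] [Fintype m] [Fintype n]
    {f : 𝕜 → Matrix m n 𝕜} {f' : Matrix m n 𝕜} {t : 𝕜} :
    HasDerivAt f f' t ↔ ∀ i j, HasDerivAt (fun τ => f τ i j) (f' i j) t :=
  (hasDerivAt_pi (φ := fun τ i => f τ i)).trans (forall_congr' fun _ => hasDerivAt_pi)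

variable [Fintype n] [DecidableEq n]

-- Only the topology of `Matrix` enters the statements below; any submultiplicative norm would do.
attribute [local instance] Matrix.linftyOpNormedRing Matrix.linftyOpNormedAlgebra

theorem hasDerivAt_blocks_of_linear {𝕜 : Type*} [NontriviallyNormedField 𝕜]
    {M : 𝕜 → Matrix (n ⊕ n) (n ⊕ n) 𝕜} {A₁₁ A₁₂ A₂₁ A₂₂ : Matrix n n 𝕜} {t : 𝕜}
    (hM : HasDerivAt M (fromBlocks A₁₁ A₁₂ A₂₁ A₂₂ * M t) t) (X : Matrix n n 𝕜) :
    HasDerivAt (fun τ => (M τ).toBlocks₁₁ * X + (M τ).toBlocks₁₂)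
        (A₁₁ * ((M t).toBlocks₁₁ * X + (M t).toBlocks₁₂)
          + A₁₂ * ((M t).toBlocks₂₁ * X + (M t).toBlocks₂₂)) t ∧
      HasDerivAt (fun τ => (M τ).toBlocks₂₁ * X + (M τ).toBlocks₂₂)
        (A₂₁ * ((M t).toBlocks₁₁ * X + (M t).toBlocks₁₂)
          + A₂₂ * ((M t).toBlocks₂₁ * X + (M t).toBlocks₂₂)) t := by
  have hY := hasDerivAt_iff.1 (hM.mul_const (fromBlocks X 0 1 0))
  simp only [mul_assoc, mul_fromBlocks_zero_one_zero, fromBlocks_multiply] at hY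
  exact ⟨hasDerivAt_iff.2 fun i j => by simpa using hY (.inl i) (.inl j),
    hasDerivAt_iff.2 fun i j => by simpa using hY (.inr i) (.inl j)⟩

theorem hasDerivAt_mul_inv_of_linear {𝕜 : Type*} [RCLike 𝕜] {P Q : 𝕜 → Matrix n n 𝕜}
    {A₁₁ A₁₂ A₂₁ A₂₂ : Matrix n n 𝕜} {t : 𝕜} (hP : HasDerivAt P (A₁₁ * P t + A₁₂ * Q t) t)
    (hQ : HasDerivAt Q (A₂₁ * P t + A₂₂ * Q t) t) (hQt : IsUnit (Q t)) :
    HasDerivAt (fun τ => P τ * (Q τ)⁻¹)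
      (A₁₂ + A₁₁ * (P t * (Q t)⁻¹) - P t * (Q t)⁻¹ * A₂₂
        - P t * (Q t)⁻¹ * A₂₁ * (P t * (Q t)⁻¹)) t := by
  simp only [nonsing_inv_eq_ringInverse]
  exact hasDerivAt_mul_ringInverse_of_linear hP hQ hQt

end Matrix

theorem riccatiSol_eq_of_eq_one {n : ℕ} {M : ℝ → Matrix (Fin n ⊕ Fin n) (Fin n ⊕ Fin n) ℝ} {t : ℝ}
    (hMt : M t = 1) (S₀ : Matrix (Fin n) (Fin n) ℝ) : riccatiSol M S₀ t = S₀ := by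
  simp [riccatiSol, hMt, ← fromBlocks_one]

theorem hasDerivAt_riccatiSol {n : ℕ} {M : ℝ → Matrix (Fin n ⊕ Fin n) (Fin n ⊕ Fin n) ℝ}
    {A₁₁ A₁₂ A₂₁ A₂₂ S₀ : Matrix (Fin n) (Fin n) ℝ} {t : ℝ}
    (hM : HasDerivAt M (fromBlocks A₁₁ A₁₂ A₂₁ A₂₂ * M t) t)
    (hQt : IsUnit ((M t).toBlocks₂₁ * S₀ + (M t).toBlocks₂₂)) :
    HasDerivAt (riccatiSol M S₀)
      (A₁₂ + A₁₁ * riccatiSol M S₀ t - riccatiSol M S₀ t * A₂₂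
        - riccatiSol M S₀ t * A₂₁ * riccatiSol M S₀ t) t :=
  let ⟨hP, hQ⟩ := Matrix.hasDerivAt_blocks_of_linear hM S₀
  Matrix.hasDerivAt_mul_inv_of_linear hP hQ hQt

theorem riccati_from_fundamental_solution_general (n : ℕ)
    (B₁ B₂ B₃ : Matrix (Fin n) (Fin n) ℝ)
    (M : ℝ → Matrix (Fin n ⊕ Fin n) (Fin n ⊕ Fin n) ℝ)
    (hM0 : M 0 = 1)
    (hM : ∀ t : ℝ, ∀ i j, HasDerivAt (fun τ => M τ i j)
      ((Matrix.fromBlocks B₁ B₂ (-B₃) (-B₁ᵀ) * M t) i j) t)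
    (S₀ : Matrix (Fin n) (Fin n) ℝ)
    (a b : ℝ)
    (hinv : ∀ t ∈ Ioo a b, IsUnit ((M t).toBlocks₂₁ * S₀ + (M t).toBlocks₂₂)) :
    riccatiSol M S₀ 0 = S₀ ∧
    ∀ t ∈ Ioo a b, ∀ i j, HasDerivAt (fun τ => riccatiSol M S₀ τ i j)
      ((B₂ + B₁ * riccatiSol M S₀ t + riccatiSol M S₀ t * B₁ᵀ
        + riccatiSol M S₀ t * B₃ * riccatiSol M S₀ t) i j) t := by
  refine ⟨riccatiSol_eq_of_eq_one hM0 S₀, fun t ht => ?_⟩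
  have hS := hasDerivAt_riccatiSol (Matrix.hasDerivAt_iff.2 (hM t)) (hinv t ht)
  simp only [mul_neg, neg_mul, sub_neg_eq_add] at hS
  exact Matrix.hasDerivAt_iff.1 hS

/-- **Riccati solutions from fundamental solutions of linear ODEs** (Theorem 3.4):
if `M' = [[B₁, B₂], [−B₃, −B₁ᵀ]]·M` with `M(0) = I`, and `M₃(t)S₀ + M₄(t)` is invertible on
an interval around `0`, then `S(t) = (M₁(t)S₀ + M₂(t))(M₃(t)S₀ + M₄(t))⁻¹` satisfies
`S(0) = S₀` and solves `S' = B₂ + B₁S + SB₁ᵀ + SB₃S` there. -/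
theorem riccati_from_fundamental_solution (n : ℕ)
    (B₁ B₂ B₃ : Matrix (Fin n) (Fin n) ℝ)
    (M : ℝ → Matrix (Fin n ⊕ Fin n) (Fin n ⊕ Fin n) ℝ)
    (hM0 : M 0 = 1)
    (hM : ∀ t : ℝ, ∀ i j, HasDerivAt (fun τ => M τ i j)
      ((Matrix.fromBlocks B₁ B₂ (-B₃) (-B₁ᵀ) * M t) i j) t)
    (S₀ : Matrix (Fin n) (Fin n) ℝ)
    (a b : ℝ) (ha : a < 0) (hb : 0 < b)
    (hinv : ∀ t ∈ Ioo a b, IsUnit ((M t).toBlocks₂₁ * S₀ + (M t).toBlocks₂₂)) :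
    riccatiSol M S₀ 0 = S₀ ∧
    ∀ t ∈ Ioo a b, ∀ i j, HasDerivAt (fun τ => riccatiSol M S₀ τ i j)
      ((B₂ + B₁ * riccatiSol M S₀ t + riccatiSol M S₀ t * B₁ᵀ
        + riccatiSol M S₀ t * B₃ * riccatiSol M S₀ t) i j) t :=
  riccati_from_fundamental_solution_general n B₁ B₂ B₃ M hM0 hM S₀ a b hinv
end
end
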